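/- Let n ≥ 1, let E := (Fin n → ℝ) × (Fin n → ℝ) with the standard primitive λ, and fix a basepoint x ∈ E. Then the restriction of the Ismagilov–Losik–Michor cocycle to the integer translation lattice is not a coboundary: there is no function b : (Fin n → ℤ) × (Fin n → ℤ) → ℝ such that for all integer vectors v, w one has 𝔊_{x,λ}(τ_{v̄}, τ_{w̄}) = b v + b w − b (v + w), where v̄ ∈ E denotes the real vector obtained from v by coercion. (This is the case M = ℝ^{2n}, Γ = ℤ^{2n} of the theorem that the Ismagilov–Losik–Michor class pulled back to the deck group of a symplectically aspherical manifold — here the torus — is nonzero.) -/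

import Mathlib

open MeasureTheory intervalIntegral

noncomputable section

/-- The standard symplectic form `ω₀` on `(Fin n → ℝ) × (Fin n → ℝ)`. -/
def omega0 {n : ℕ} (z w : (Fin n → ℝ) × (Fin n → ℝ)) : ℝ :=
  ∑ i, (z.1 i * w.2 i - z.2 i * w.1 i)

/-- The standard primitive `λ(p,q)(u,v) = (1/2)·∑ i, (p i * v i − q i * u i)` of the
standard symplectic form, so that `dλ = ω₀`. -/
def stdPrimitive (n : ℕ) (z : (Fin n → ℝ) × (Fin n → ℝ)) :
    ((Fin n → ℝ) × (Fin n → ℝ)) →L[ℝ] ℝ :=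
  LinearMap.toContinuousLinearMap
    { toFun := fun w => (1 / 2) * ∑ i, (z.1 i * w.2 i - z.2 i * w.1 i)
      map_add' := by
        intro a b
        simp only [Prod.fst_add, Prod.snd_add, Pi.add_apply]
        rw [← mul_add, ← Finset.sum_add_distrib]
        congr 1
        apply Finset.sum_congr rfl
        intro i _
        ring
      map_smul' := by
        intro r a
        simp only [Prod.smul_fst, Prod.smul_snd, Pi.smul_apply, smul_eq_mul,
          RingHom.id_apply]
        rw [Finset.mul_sum, Finset.mul_sum, Finset.mul_sum]
        apply Finset.sum_congr rfl
        intro i _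
        ring }

/-- The pullback `g^*λ` of a one-form `λ` by a differentiable map `g`. -/
def oneFormPullback {n : ℕ}
    (g : (Fin n → ℝ) × (Fin n → ℝ) → (Fin n → ℝ) × (Fin n → ℝ))
    (lam : (Fin n → ℝ) × (Fin n → ℝ) → (((Fin n → ℝ) × (Fin n → ℝ)) →L[ℝ] ℝ)) :
    (Fin n → ℝ) × (Fin n → ℝ) → (((Fin n → ℝ) × (Fin n → ℝ)) →L[ℝ] ℝ) :=
  fun y => (lam (g y)).comp (fderiv ℝ g y)

/-- A one-form is closed if its derivative is symmetric. -/
def IsClosedOneForm {n : ℕ}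
    (ω : (Fin n → ℝ) × (Fin n → ℝ) → (((Fin n → ℝ) × (Fin n → ℝ)) →L[ℝ] ℝ)) : Prop :=
  ∀ y u v : (Fin n → ℝ) × (Fin n → ℝ), ((fderiv ℝ ω y) u) v = ((fderiv ℝ ω y) v) u

/-- The Ismagilov–Losik–Michor two-cocycle `𝔊_{x,λ}(g,h)`: the line integral of
`g^*λ − λ` along the straight segment from `x` to `h x`. -/
def ILM {n : ℕ} (x : (Fin n → ℝ) × (Fin n → ℝ))
    (lam : (Fin n → ℝ) × (Fin n → ℝ) → (((Fin n → ℝ) × (Fin n → ℝ)) →L[ℝ] ℝ))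
    (g h : (Fin n → ℝ) × (Fin n → ℝ) → (Fin n → ℝ) × (Fin n → ℝ)) : ℝ :=
  ∫ t in (0:ℝ)..1,
    (oneFormPullback g lam (x + t • (h x - x)) - lam (x + t • (h x - x))) (h x - x)


/-- The coercion of an integer lattice vector to `(Fin n → ℝ) × (Fin n → ℝ)`. -/
def latticeCast {n : ℕ} (v : (Fin n → ℤ) × (Fin n → ℤ)) : (Fin n → ℝ) × (Fin n → ℝ) :=
  (fun i => (v.1 i : ℝ), fun i => (v.2 i : ℝ))

/-! On translations `τ_a, τ_c` the integrand of `𝔊_{x,λ}` is `λ(y + a)(c) − λ(y)(c) = λ(a)(c)`,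
since `λ` is linear in the base point; so `𝔊_{x,λ}(τ_a, τ_c) = ω₀(a, c) / 2` is antisymmetric
in `(a, c)`. A coboundary `b v + b w − b (v + w)` of an abelian group is symmetric, so the two
would force `ω₀` to vanish on the lattice, whereas `ω₀((1,0),(0,1)) = n`. -/

lemma stdPrimitive_apply {n : ℕ} (z w : (Fin n → ℝ) × (Fin n → ℝ)) :
    stdPrimitive n z w = (1 / 2) * ∑ i, (z.1 i * w.2 i - z.2 i * w.1 i) := rfl

lemma stdPrimitive_eq_half_omega0 {n : ℕ} (z w : (Fin n → ℝ) × (Fin n → ℝ)) :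
    stdPrimitive n z w = omega0 z w / 2 := by
  rw [stdPrimitive_apply, omega0]
  ring

lemma omega0_swap {n : ℕ} (z w : (Fin n → ℝ) × (Fin n → ℝ)) :
    omega0 w z = -omega0 z w := by
  simp only [omega0, ← Finset.sum_neg_distrib]
  exact Finset.sum_congr rfl fun i _ => by ring

lemma stdPrimitive_add {n : ℕ} (y a : (Fin n → ℝ) × (Fin n → ℝ)) :
    stdPrimitive n (y + a) = stdPrimitive n y + stdPrimitive n a := by
  refine ContinuousLinearMap.ext fun w => ?_
  simp only [_root_.add_apply, stdPrimitive_apply, ← mul_add,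
    ← Finset.sum_add_distrib, Prod.fst_add, Prod.snd_add, Pi.add_apply]
  exact congrArg _ (Finset.sum_congr rfl fun i _ => by ring)

lemma oneFormPullback_add_const {n : ℕ}
    (lam : (Fin n → ℝ) × (Fin n → ℝ) → (((Fin n → ℝ) × (Fin n → ℝ)) →L[ℝ] ℝ))
    (a y : (Fin n → ℝ) × (Fin n → ℝ)) :
    oneFormPullback (fun z => z + a) lam y = lam (y + a) := by
  rw [oneFormPullback, fderiv_add_const, fderiv_fun_id, ContinuousLinearMap.comp_id]

lemma ILM_translation_of_sub_eq {n : ℕ} (x : (Fin n → ℝ) × (Fin n → ℝ))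
    (lam : (Fin n → ℝ) × (Fin n → ℝ) → (((Fin n → ℝ) × (Fin n → ℝ)) →L[ℝ] ℝ))
    (a c : (Fin n → ℝ) × (Fin n → ℝ)) (L : ((Fin n → ℝ) × (Fin n → ℝ)) →L[ℝ] ℝ)
    (hL : ∀ y, lam (y + a) - lam y = L) :
    ILM x lam (fun z => z + a) (fun z => z + c) = L c := by
  simp [ILM, oneFormPullback_add_const, hL]

lemma ILM_stdPrimitive_translation {n : ℕ} (x a c : (Fin n → ℝ) × (Fin n → ℝ)) :
    ILM x (stdPrimitive n) (fun z => z + a) (fun z => z + c) = omega0 a c / 2 := by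
  rw [ILM_translation_of_sub_eq x _ a c (stdPrimitive n a)
    (fun y => by rw [stdPrimitive_add, add_sub_cancel_left]), stdPrimitive_eq_half_omega0]

lemma omega0_latticeCast_basis (n : ℕ) :
    omega0 (latticeCast (((fun _ => 1), 0) : (Fin n → ℤ) × (Fin n → ℤ)))
      (latticeCast (0, fun _ => 1)) = n := by
  simp [omega0, latticeCast]

/-- For `n ≥ 1`, the restriction of the Ismagilov–Losik–Michor cocycle to the integer
translation lattice `ℤ^{2n} ⊂ ℝ^{2n}` is not a coboundary.  This is the case
`M = ℝ^{2n}`, `Γ = ℤ^{2n}` of the theorem that the Ismagilov–Losik–Michor class pulled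
back to the deck group of a symplectically aspherical manifold (here the torus) is
nonzero. -/
theorem ILM_not_coboundary_on_lattice {n : ℕ} (hn : 1 ≤ n)
    (x : (Fin n → ℝ) × (Fin n → ℝ)) :
    ¬ ∃ b : (Fin n → ℤ) × (Fin n → ℤ) → ℝ,
        ∀ v w : (Fin n → ℤ) × (Fin n → ℤ),
          ILM x (stdPrimitive n) (fun z => z + latticeCast v) (fun z => z + latticeCast w)
            = b v + b w - b (v + w) := by
  rintro ⟨b, hb⟩
  have hsymm : ∀ v w, omega0 (latticeCast v) (latticeCast w)
      = omega0 (latticeCast w) (latticeCast v) := fun v w => by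
    have hvw := hb v w
    have hwv := hb w v
    rw [ILM_stdPrimitive_translation] at hvw hwv
    rw [add_comm w v] at hwv
    linarith
  have hzero := hsymm ((fun _ => 1), 0) (0, fun _ => 1)
  rw [omega0_swap (latticeCast ((fun _ => 1), 0)), omega0_latticeCast_basis] at hzero
  have hn' : (1 : ℝ) ≤ n := by exact_mod_cast hn
  linarith

end
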